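/- arXiv:2108.08843 — 3 statements merged into one kernel-verified Lean document; each statement's English description precedes it below -/
import Mathlib

section
/- Conversely to the subsidy upper bound: there exists a nonnegative subsidy vector s ∈ ℝ^A_{≥0} with Σ_{a∈A} s_a equal to the Subset Instability I(u, X, τ, A) such that (X, τ + s) is stable. Hence Subset Instability equals the minimum total stabilizing subsidy. -/
/-! A subsidy `s` stabilizes `(μ, τ)` iff the payoffs `q a = u a (μ a) + τ a + s a` are
nonnegative and dominate `u m w + u w m` on every pair. Such payoffs pay for any matching on any
`S`, so every stabilizing subsidy costs at least the Subset Instability. Conversely, take a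
stabilizing `s` of least total (the total is coercive on the closed feasible set). Minimality
forces complementary slackness: if a set `D` of subsidized agents with positive payoff, all on
one side, had fewer tight partners than members, moving a little subsidy from `D` to those
partners would stay stabilizing and be cheaper. So Hall's condition holds on both sides, and
Mendelsohn–Dulmage gives one tight matching covering all such agents; on the matched and
subsidized agents `S` it realizes `q` exactly, so `maxWeight S - ∑ a ∈ S, (q a - s a) = ∑ s`. -/

open Finset

/-- A two-sided market: agents `A` partitioned into customers `M` and providers `W`. -/
structure TwoSidedMarket (A : Type*) [Fintype A] [DecidableEq A] where
  M : Finset A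
  W : Finset A
  disj : Disjoint M W
  cover : M ∪ W = Finset.univ

variable {A : Type*} [Fintype A] [DecidableEq A]

/-- `μ` is (the partner map of) a matching on the subset `S` of agents:
it is an involution, agents outside `S` are unmatched, and matched pairs cross sides. -/
def IsMatchingOn (Mkt : TwoSidedMarket A) (S : Finset A) (μ : A → A) : Prop :=
  (∀ a, μ (μ a) = a) ∧ (∀ a, μ a ≠ a → a ∈ S) ∧
  (∀ a, μ a ≠ a → (a ∈ Mkt.M ∧ μ a ∈ Mkt.W) ∨ (a ∈ Mkt.W ∧ μ a ∈ Mkt.M))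

/-- Transfers `τ` are zero-sum for the matching `μ`. -/
def ZeroSum (μ : A → A) (τ : A → ℝ) : Prop :=
  (∀ a, μ a ≠ a → τ a + τ (μ a) = 0) ∧ (∀ a, μ a = a → τ a = 0)

/-- Stability of the market outcome `(μ, τ)` with respect to utilities `u`:
individual rationality and no blocking pairs. -/
def Stable (Mkt : TwoSidedMarket A) (u : A → A → ℝ) (μ : A → A) (τ : A → ℝ) : Prop :=
  (∀ a, 0 ≤ u a (μ a) + τ a) ∧
  (∀ m ∈ Mkt.M, ∀ w ∈ Mkt.W,
    u m w + u w m ≤ (u m (μ m) + τ m) + (u w (μ w) + τ w))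

/-- Maximum total utility of a matching on the subset `S`. -/
noncomputable def maxWeight (Mkt : TwoSidedMarket A) (u : A → A → ℝ) (S : Finset A) : ℝ :=
  sSup {x | ∃ μ, IsMatchingOn Mkt S μ ∧ x = ∑ a ∈ S, u a (μ a)}

/-- Subset Instability of the market outcome `(μ, τ)` with respect to utilities `u`. -/
noncomputable def instability (Mkt : TwoSidedMarket A) (u : A → A → ℝ)
    (μ : A → A) (τ : A → ℝ) : ℝ :=
  sSup {x | ∃ S : Finset A, x = maxWeight Mkt u S - ∑ a ∈ S, (u a (μ a) + τ a)}

open Set Function in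
theorem mendelsohn_dulmage {α β : Type*} (r : α → β → Prop) {X : Set α} {Y : Set β}
    {f : α → β} {g : β → α} (hf : InjOn f X) (hg : InjOn g Y)
    (hfr : ∀ x ∈ X, r x (f x)) (hgr : ∀ y ∈ Y, r (g y) y) :
    ∃ (Z : Set α) (h : α → β), X ⊆ Z ∧ Y ⊆ h '' Z ∧ InjOn h Z ∧ ∀ z ∈ Z, r z (h z) := by
  classical
  rcases isEmpty_or_nonempty β with _ | _
  · exact ⟨X, f, subset_rfl, fun y => isEmptyElim y, hf, hfr⟩
  let F : Set α →o Set α :=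
    ⟨fun T => X \ g '' (Y \ f '' T), fun T T' hT => by dsimp only; gcongr⟩
  set T := F.lfp
  -- As in Schröder–Bernstein: `T` keeps its `f`-edges, and the `Y`-agents that `f` misses
  -- from `T` take their `g`-edges, which never land in `T`.
  have hT : X \ g '' (Y \ f '' T) = T := F.map_lfp
  have hTX : T ⊆ X := hT ▸ sdiff_subset
  have hgT : ∀ y ∈ Y \ f '' T, g y ∉ T := fun y hy hyT =>
    ((hT.symm ▸ hyT : g y ∈ X \ g '' (Y \ f '' T))).2 (mem_image_of_mem g hy)
  have hinv : LeftInvOn (invFunOn g (Y \ f '' T)) g (Y \ f '' T) :=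
    (hg.mono sdiff_subset).leftInvOn_invFunOn
  refine ⟨T ∪ g '' (Y \ f '' T), T.piecewise f (invFunOn g (Y \ f '' T)), ?_, ?_, ?_, ?_⟩
  · intro x hx
    by_cases hxT : x ∈ T
    · exact .inl hxT
    · exact .inr (by_contra fun h => hxT (hT ▸ ⟨hx, h⟩))
  · intro y hy
    by_cases hyT : y ∈ f '' T
    · obtain ⟨x, hx, rfl⟩ := hyT
      exact ⟨x, .inl hx, piecewise_eq_of_mem _ _ _ hx⟩
    · refine ⟨g y, .inr (mem_image_of_mem g ⟨hy, hyT⟩), ?_⟩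
      rw [piecewise_eq_of_notMem _ _ _ (hgT y ⟨hy, hyT⟩), hinv ⟨hy, hyT⟩]
  · have hdisj : Disjoint T (g '' (Y \ f '' T)) :=
      Set.disjoint_right.2 fun _ ⟨y, hy, hyx⟩ => hyx ▸ hgT y hy
    refine (injOn_union hdisj).2 ⟨(hf.mono hTX).congr (piecewise_eqOn _ _ _).symm,
      (invFunOn_injOn_image g _).congr fun x hx =>
        (piecewise_eq_of_notMem _ _ _ (Set.disjoint_right.1 hdisj hx)).symm, ?_⟩
    rintro x hx _ ⟨y, hy, rfl⟩ hxy
    rw [piecewise_eq_of_mem _ _ _ hx, piecewise_eq_of_notMem _ _ _ (hgT y hy), hinv hy] at hxy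
    exact hy.2 ⟨x, hx, hxy⟩
  · rintro z (hz | ⟨y, hy, rfl⟩)
    · rw [piecewise_eq_of_mem _ _ _ hz]
      exact hfr z (hTX hz)
    · rw [piecewise_eq_of_notMem _ _ _ (hgT y hy), hinv hy]
      exact hgr y hy.1

open Set Function in
theorem exists_involutive_eqOn_of_injOn {α : Type*} {Z : Set α} {h : α → α}
    (hinj : InjOn h Z) (hdisj : Disjoint Z (h '' Z)) :
    ∃ ν : α → α, Involutive ν ∧ EqOn ν h Z ∧ ∀ a ∉ Z ∪ h '' Z, ν a = a := by
  classical
  rcases isEmpty_or_nonempty α with _ | _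
  · exact ⟨id, fun a => rfl, fun a => isEmptyElim a, fun a => isEmptyElim a⟩
  let ν := Z.piecewise h ((h '' Z).piecewise (invFunOn h Z) id)
  have hνh : EqOn ν h Z := piecewise_eqOn _ _ _
  have hνZ : ∀ z ∈ Z, ν (h z) = z := fun z hz => by
    simp only [ν, piecewise_eq_of_mem _ _ _ (mem_image_of_mem h hz), hinj.leftInvOn_invFunOn hz,
      piecewise_eq_of_notMem _ _ _ (Set.disjoint_right.1 hdisj (mem_image_of_mem h hz))]
  refine ⟨ν, fun a => ?_, hνh, fun a ha => ?_⟩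
  · by_cases haZ : a ∈ Z
    · rw [hνh haZ, hνZ a haZ]
    by_cases ha : a ∈ h '' Z
    · obtain ⟨z, hz, rfl⟩ := ha
      rw [hνZ z hz, hνh hz]
    · simp only [ν, piecewise_eq_of_notMem _ _ _ haZ, piecewise_eq_of_notMem _ _ _ ha, id]
  · rw [Set.mem_union, not_or] at ha
    simp only [ν, piecewise_eq_of_notMem _ _ _ ha.1, piecewise_eq_of_notMem _ _ _ ha.2, id]

theorem Finset.exists_injOn_of_forall_card_le_card_biUnion {α : Type*} [DecidableEq α]
    (P : Finset α) (t : α → Finset α) (hP : ∀ D ⊆ P, #D ≤ #(D.biUnion t)) :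
    ∃ f : α → α, Set.InjOn f P ∧ ∀ a ∈ P, f a ∈ t a := by
  obtain ⟨f, hf, hft⟩ := (all_card_le_biUnion_card_iff_exists_injective fun a : P => t a).1
    fun D => by
      simpa [map_eq_image, image_biUnion, card_image_of_injective _ Subtype.val_injective]
        using hP (D.map (Function.Embedding.subtype _))
          fun a ha => by obtain ⟨x, -, rfl⟩ := mem_map.1 ha; exact x.2
  refine ⟨fun a => if ha : a ∈ P then f ⟨a, ha⟩ else a, fun a ha b hb hab => ?_, fun a ha => ?_⟩
  · have := hf (show f ⟨a, ha⟩ = f ⟨b, hb⟩ by simpa [mem_coe.1 ha, mem_coe.1 hb] using hab)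
    exact congrArg Subtype.val this
  · simpa [dif_pos ha] using hft ⟨a, ha⟩

def TwoSidedMarket.swap (Mkt : TwoSidedMarket A) : TwoSidedMarket A :=
  ⟨Mkt.W, Mkt.M, Mkt.disj.symm, by rw [union_comm, Mkt.cover]⟩

def IsStablePayoff (Mkt : TwoSidedMarket A) (u : A → A → ℝ) (q : A → ℝ) : Prop :=
  (∀ a, 0 ≤ q a) ∧ ∀ m ∈ Mkt.M, ∀ w ∈ Mkt.W, u m w + u w m ≤ q m + q w

def IsStabilizingSubsidy (Mkt : TwoSidedMarket A) (u : A → A → ℝ) (p s : A → ℝ) : Prop :=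
  (∀ a, 0 ≤ s a) ∧ IsStablePayoff Mkt u (fun a => p a + s a)

noncomputable def tightPartners (Mkt : TwoSidedMarket A) (u : A → A → ℝ) (q : A → ℝ) (a : A) :
    Finset A :=
  Mkt.W.filter fun b => u a b + u b a = q a + q b

theorem isMatchingOn_id (Mkt : TwoSidedMarket A) (S : Finset A) : IsMatchingOn Mkt S id :=
  ⟨fun _ => rfl, fun _ h => absurd rfl h, fun _ h => absurd rfl h⟩

theorem bddAbove_matchingWeights (Mkt : TwoSidedMarket A) (u : A → A → ℝ) (S : Finset A) :
    BddAbove {x | ∃ μ, IsMatchingOn Mkt S μ ∧ x = ∑ a ∈ S, u a (μ a)} :=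
  ((Set.finite_range fun μ : A → A => ∑ a ∈ S, u a (μ a)).subset <| by
    rintro _ ⟨μ, -, rfl⟩; exact ⟨μ, rfl⟩).bddAbove

section Matching

variable {Mkt : TwoSidedMarket A} {u : A → A → ℝ} {S : Finset A} {ν : A → A}

theorem IsMatchingOn.mono {T : Finset A} (hν : IsMatchingOn Mkt S ν) (hST : S ⊆ T) :
    IsMatchingOn Mkt T ν :=
  ⟨hν.1, fun a ha => hST (hν.2.1 a ha), hν.2.2⟩

theorem IsMatchingOn.apply_mem (hν : IsMatchingOn Mkt S ν) {a : A} (ha : a ∈ S) : ν a ∈ S := by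
  by_cases h : ν a = a
  · rwa [h]
  · exact hν.2.1 (ν a) (by rwa [hν.1 a, ne_comm])

theorem IsMatchingOn.sum_comp (hν : IsMatchingOn Mkt S ν) (F : A → ℝ) :
    ∑ a ∈ S, F (ν a) = ∑ a ∈ S, F a :=
  sum_nbij' ν ν (fun _ => hν.apply_mem) (fun _ => hν.apply_mem) (fun a _ => hν.1 a)
    (fun a _ => hν.1 a) fun _ _ => rfl

theorem IsMatchingOn.two_mul_sum (hν : IsMatchingOn Mkt S ν) (G : A → A → ℝ) :
    2 * ∑ a ∈ S, G a (ν a) = ∑ a ∈ S, (G a (ν a) + G (ν a) a) := by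
  rw [two_mul, sum_add_distrib, ← hν.sum_comp fun a => G a (ν a)]
  simp only [hν.1]

theorem IsStablePayoff.add_le_of_isMatchingOn {q : A → ℝ} (hq : IsStablePayoff Mkt u q)
    (hu : ∀ a, u a a = 0) (hν : IsMatchingOn Mkt S ν) (a : A) :
    u a (ν a) + u (ν a) a ≤ q a + q (ν a) := by
  by_cases h : ν a = a
  · rw [h, hu, add_zero]
    exact add_nonneg (hq.1 a) (hq.1 a)
  rcases hν.2.2 a h with ⟨ha, hνa⟩ | ⟨ha, hνa⟩
  · exact hq.2 a ha (ν a) hνa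
  · linarith [hq.2 (ν a) hνa a ha]

theorem IsStablePayoff.sum_le_of_isMatchingOn {q : A → ℝ} (hq : IsStablePayoff Mkt u q)
    (hu : ∀ a, u a a = 0) (hν : IsMatchingOn Mkt S ν) :
    ∑ a ∈ S, u a (ν a) ≤ ∑ a ∈ S, q a := by
  have := sum_le_sum fun a (_ : a ∈ S) => hq.add_le_of_isMatchingOn hu hν a
  linarith [hν.two_mul_sum u, hν.two_mul_sum fun a _ => q a]

open Classical Set Function in
theorem exists_isMatchingOn_of_injOn {Z : Set A} {h : A → A}
    (hinj : InjOn h Z) (hZ : ∀ z ∈ Z, z ∈ Mkt.M ∧ h z ∈ Mkt.W) :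
    ∃ ν, IsMatchingOn Mkt (Z ∪ h '' Z).toFinset ν ∧ ∀ z ∈ Z, ν z = h z ∧ ν (h z) = z := by
  have hdisj : Disjoint Z (h '' Z) := Set.disjoint_left.2 fun z hz ⟨z', hz', hzz'⟩ =>
    Finset.disjoint_left.1 Mkt.disj (hZ z hz).1 (hzz' ▸ (hZ z' hz').2)
  obtain ⟨ν, hνinv, hνh, hνid⟩ := exists_involutive_eqOn_of_injOn hinj hdisj
  have hνZ : ∀ z ∈ Z, ν z = h z ∧ ν (h z) = z := fun z hz =>
    ⟨hνh hz, by rw [← hνh hz, hνinv]⟩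
  refine ⟨ν, ⟨hνinv, fun a ha => ?_, fun a ha => ?_⟩, hνZ⟩
  · exact mem_toFinset.2 (by_contra fun h => ha (hνid a h))
  · obtain hZa | ⟨z, hz, rfl⟩ := (by_contra fun h => ha (hνid a h) : a ∈ Z ∪ h '' Z)
    · exact .inl ((hνZ a hZa).1 ▸ hZ a hZa)
    · rw [(hνZ z hz).2]
      exact .inr (hZ z hz).symm

theorem sum_le_maxWeight (hν : IsMatchingOn Mkt S ν) : ∑ a ∈ S, u a (ν a) ≤ maxWeight Mkt u S :=
  le_csSup (bddAbove_matchingWeights Mkt u S) ⟨ν, hν, rfl⟩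

theorem maxWeight_le_of_isStablePayoff {q : A → ℝ} (hq : IsStablePayoff Mkt u q)
    (hu : ∀ a, u a a = 0) (S : Finset A) :
    maxWeight Mkt u S ≤ ∑ a ∈ S, q a :=
  csSup_le ⟨_, id, isMatchingOn_id Mkt S, rfl⟩ fun _ ⟨_, hν, hx⟩ =>
    hx ▸ hq.sum_le_of_isMatchingOn hu hν

end Matching

theorem sub_le_instability (Mkt : TwoSidedMarket A) (u : A → A → ℝ) (μ : A → A) (τ : A → ℝ)
    (S : Finset A) :
    maxWeight Mkt u S - ∑ a ∈ S, (u a (μ a) + τ a) ≤ instability Mkt u μ τ :=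
  le_csSup ((Set.finite_range fun S : Finset A =>
    maxWeight Mkt u S - ∑ a ∈ S, (u a (μ a) + τ a)).subset <| by
      rintro _ ⟨S, rfl⟩; exact ⟨S, rfl⟩).bddAbove ⟨S, rfl⟩

theorem instability_le_sum {Mkt : TwoSidedMarket A} {u : A → A → ℝ} {μ : A → A} {τ s : A → ℝ}
    (hu : ∀ a, u a a = 0) (hs : IsStabilizingSubsidy Mkt u (fun a => u a (μ a) + τ a) s) :
    instability Mkt u μ τ ≤ ∑ a, s a := by
  refine csSup_le ⟨_, ∅, rfl⟩ fun _ ⟨S, hx⟩ => hx ▸ ?_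
  have hS := maxWeight_le_of_isStablePayoff hs.2 hu S
  have hsS : ∑ a ∈ S, s a ≤ ∑ a, s a := sum_le_univ_sum_of_nonneg hs.1
  rw [sum_add_distrib] at hS
  linarith

section Subsidy

variable (Mkt : TwoSidedMarket A) (u : A → A → ℝ) (p : A → ℝ)

theorem exists_isStabilizingSubsidy : ∃ t, IsStabilizingSubsidy Mkt u p t := by
  set K := ∑ a, (|p a| + ∑ b, |u a b|)
  have hK : ∀ a b, |p a| + |u a b| ≤ K := fun a b =>
    calc |p a| + |u a b| ≤ |p a| + ∑ b, |u a b| :=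
          by gcongr; exact single_le_sum (fun b _ => abs_nonneg (u a b)) (mem_univ b)
      _ ≤ K := single_le_sum (f := fun a => |p a| + ∑ b, |u a b|)
          (fun a _ => by positivity) (mem_univ a)
  refine ⟨fun _ => K, fun a => le_trans (by positivity) (hK a a), fun a => ?_, fun m _ w _ => ?_⟩
  · linarith [neg_abs_le (p a), hK a a, abs_nonneg (u a a)]
  · linarith [neg_abs_le (p m), neg_abs_le (p w), le_abs_self (u m w), le_abs_self (u w m),
      hK m w, hK w m]

theorem isClosed_setOf_isStabilizingSubsidy :
    IsClosed {t | IsStabilizingSubsidy Mkt u p t} := by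
  simp only [IsStabilizingSubsidy, IsStablePayoff, Set.ofPred_and, Set.ofPred_forall]
  refine .inter (isClosed_iInter fun a => isClosed_le continuous_const (continuous_apply a)) <|
    .inter (isClosed_iInter fun a => isClosed_le continuous_const (by fun_prop)) <|
    isClosed_iInter fun m => isClosed_iInter fun _ => isClosed_iInter fun w =>
      isClosed_iInter fun _ => isClosed_le continuous_const (by fun_prop)

theorem exists_isStabilizingSubsidy_forall_sum_le :
    ∃ s, IsStabilizingSubsidy Mkt u p s ∧
      ∀ t, IsStabilizingSubsidy Mkt u p t → ∑ a, s a ≤ ∑ a, t a := by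
  obtain ⟨t₀, ht₀⟩ := exists_isStabilizingSubsidy Mkt u p
  -- Minimize over the sublevel set below `t₀`, which is compact since subsidies are nonnegative.
  set F := {t | IsStabilizingSubsidy Mkt u p t} ∩ {t | ∑ a, t a ≤ ∑ a, t₀ a}
  have hF : IsCompact F := by
    refine (isCompact_Icc (a := 0) (b := fun _ => ∑ a, t₀ a)).of_isClosed_subset
      ((isClosed_setOf_isStabilizingSubsidy Mkt u p).inter
        (isClosed_le (by fun_prop) continuous_const)) fun t ⟨ht, hsum⟩ =>
        ⟨ht.1, fun a => (single_le_sum (fun b _ => ht.1 b) (mem_univ a)).trans hsum⟩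
  have ht₀F : t₀ ∈ F := ⟨ht₀, le_refl (∑ a, t₀ a)⟩
  obtain ⟨s, ⟨hs, -⟩, hmin⟩ :=
    hF.exists_isMinOn ⟨t₀, ht₀F⟩ (f := fun t => ∑ a, t a) (by fun_prop)
  refine ⟨s, hs, fun t ht => ?_⟩
  by_cases htF : ∑ a, t a ≤ ∑ a, t₀ a
  · exact hmin ⟨ht, htF⟩
  · exact (hmin ht₀F).trans (not_le.1 htF).le

end Subsidy

theorem isStablePayoff_swap {Mkt : TwoSidedMarket A} {u : A → A → ℝ} {q : A → ℝ} :
    IsStablePayoff Mkt.swap u q ↔ IsStablePayoff Mkt u q :=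
  and_congr_right' ⟨fun h m hm w hw => by linarith [h w hw m hm],
    fun h w hw m hm => by linarith [h m hm w hw]⟩

theorem isStabilizingSubsidy_swap {Mkt : TwoSidedMarket A} {u : A → A → ℝ} {p s : A → ℝ} :
    IsStabilizingSubsidy Mkt.swap u p s ↔ IsStabilizingSubsidy Mkt u p s :=
  and_congr_right' isStablePayoff_swap

section Minimal

variable {Mkt : TwoSidedMarket A} {u : A → A → ℝ} {p s : A → ℝ}

theorem IsStabilizingSubsidy.shift (hs : IsStabilizingSubsidy Mkt u p s) {D N : Finset A}
    (hDM : D ⊆ Mkt.M) (hNW : N ⊆ Mkt.W)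
    (hN : ∀ m ∈ D, tightPartners Mkt u (fun a => p a + s a) m ⊆ N) {ε : ℝ} (hε : 0 ≤ ε)
    (hεD : ∀ a ∈ D, ε ≤ s a ∧ ε ≤ p a + s a)
    (hεslack : ∀ m ∈ D, ∀ w ∈ Mkt.W, w ∉ tightPartners Mkt u (fun a => p a + s a) m →
      ε ≤ (p m + s m) + (p w + s w) - (u m w + u w m)) :
    IsStabilizingSubsidy Mkt u p
      (fun a => s a + (if a ∈ N then ε else 0) - (if a ∈ D then ε else 0)) := by
  have hDN : ∀ a ∈ D, a ∉ N := fun a ha haN =>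
    disjoint_left.1 Mkt.disj (hDM ha) (hNW haN)
  refine ⟨fun a => ?_, fun a => ?_, fun m hm w hw => ?_⟩
  · have := hs.1 a
    by_cases ha : a ∈ D
    · simp only [ha, hDN a ha, if_false, if_true]; linarith [hεD a ha]
    · simp only [ha, if_false]; split_ifs <;> linarith
  · have := hs.2.1 a
    by_cases ha : a ∈ D
    · simp only [ha, hDN a ha, if_false, if_true]; linarith [hεD a ha]
    · simp only [ha, if_false]; split_ifs <;> linarith
  · have hwD : w ∉ D := fun hwD => disjoint_left.1 Mkt.disj (hDM hwD) hw
    have hmN : m ∉ N := fun hmN => disjoint_left.1 Mkt.disj hm (hNW hmN)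
    have hstable := hs.2.2 m hm w hw
    simp only [hwD, hmN, if_false]
    by_cases hmD : m ∈ D
    · by_cases hwt : w ∈ tightPartners Mkt u (fun a => p a + s a) m
      · simp only [hmD, hN m hmD hwt, if_true]; linarith
      · have := hεslack m hmD w hw hwt
        simp only [hmD, if_true]; split_ifs <;> linarith
    · simp only [hmD, if_false]; split_ifs <;> linarith

open Filter Topology in
theorem card_le_card_biUnion_tightPartners (hs : IsStabilizingSubsidy Mkt u p s)
    (hmin : ∀ t, IsStabilizingSubsidy Mkt u p t → ∑ a, s a ≤ ∑ a, t a) {D : Finset A}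
    (hD : ∀ a ∈ D, a ∈ Mkt.M ∧ 0 < s a ∧ 0 < p a + s a) :
    #D ≤ #(D.biUnion (tightPartners Mkt u (fun a => p a + s a))) := by
  set N := D.biUnion (tightPartners Mkt u (fun a => p a + s a))
  by_contra! hND
  have hslack : ∀ m ∈ D, ∀ w ∈ Mkt.W, ∀ᶠ ε in 𝓝 (0 : ℝ),
      w ∉ tightPartners Mkt u (fun a => p a + s a) m →
        ε ≤ (p m + s m) + (p w + s w) - (u m w + u w m) := fun m hm w hw => by
    by_cases hwt : w ∈ tightPartners Mkt u (fun a => p a + s a) m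
    · exact .of_forall fun _ h => absurd hwt h
    · have hlt : u m w + u w m < (p m + s m) + (p w + s w) :=
        (hs.2.2 m (hD m hm).1 w hw).lt_of_ne fun h => hwt (mem_filter.2 ⟨hw, h⟩)
      exact (eventually_le_nhds (sub_pos.2 hlt)).mono fun _ h _ => h
  have hε : ∀ᶠ ε in 𝓝 (0 : ℝ), (∀ a ∈ D, ε ≤ s a ∧ ε ≤ p a + s a) ∧
      ∀ m ∈ D, ∀ w ∈ Mkt.W, w ∉ tightPartners Mkt u (fun a => p a + s a) m →
        ε ≤ (p m + s m) + (p w + s w) - (u m w + u w m) :=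
    ((eventually_all_finset D).2 fun a ha =>
      (eventually_le_nhds (hD a ha).2.1).and (eventually_le_nhds (hD a ha).2.2)).and
    ((eventually_all_finset D).2 fun m hm => (eventually_all_finset _).2 (hslack m hm))
  obtain ⟨ε, ⟨hεD, hεslack⟩, hε0 : 0 < ε⟩ :=
    ((hε.filter_mono nhdsWithin_le_nhds).and (self_mem_nhdsWithin (s := Set.Ioi 0))).exists
  have hDM : D ⊆ Mkt.M := fun a ha => (hD a ha).1
  have hNW : N ⊆ Mkt.W := biUnion_subset.2 fun _ _ => filter_subset _ _
  have := hmin _ (hs.shift hDM hNW (fun m hm => subset_biUnion_of_mem _ hm) hε0.le hεD hεslack)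
  simp only [sum_sub_distrib, sum_add_distrib, sum_ite_mem, univ_inter, sum_const,
    nsmul_eq_mul] at this
  have : (#N : ℝ) < #D := by exact_mod_cast hND
  nlinarith

open Classical in
theorem exists_isMatchingOn_tight_cover (hs : IsStabilizingSubsidy Mkt u p s)
    (hmin : ∀ t, IsStabilizingSubsidy Mkt u p t → ∑ a, s a ≤ ∑ a, t a) :
    ∃ (T : Finset A) (ν : A → A), IsMatchingOn Mkt T ν ∧
      (∀ a, 0 < s a → 0 < p a + s a → a ∈ T) ∧
      ∀ a ∈ T, u a (ν a) + u (ν a) a = (p a + s a) + (p (ν a) + s (ν a)) := by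
  set q := fun a => p a + s a
  obtain ⟨f, hf, hft⟩ := exists_injOn_of_forall_card_le_card_biUnion
    (Mkt.M.filter fun a => 0 < s a ∧ 0 < q a) (tightPartners Mkt u q) fun D hD =>
      card_le_card_biUnion_tightPartners hs hmin fun a ha => by simpa using hD ha
  obtain ⟨g, hg, hgt⟩ := exists_injOn_of_forall_card_le_card_biUnion
    (Mkt.W.filter fun a => 0 < s a ∧ 0 < q a) (tightPartners Mkt.swap u q) fun D hD =>
      card_le_card_biUnion_tightPartners (isStabilizingSubsidy_swap.2 hs)
        (fun t ht => hmin t (isStabilizingSubsidy_swap.1 ht)) fun a ha => by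
          simpa [TwoSidedMarket.swap] using hD ha
  obtain ⟨Z, h, hfZ, hgZ, hinj, hZ⟩ :=
    mendelsohn_dulmage (fun a b => a ∈ Mkt.M ∧ b ∈ Mkt.W ∧ u a b + u b a = q a + q b) hf hg
      (fun a ha => by
        obtain ⟨haM, -⟩ := mem_filter.1 ha
        obtain ⟨hfa, hfat⟩ := mem_filter.1 (hft a ha)
        exact ⟨haM, hfa, hfat⟩)
      (fun b hb => by
        obtain ⟨hbW, -⟩ := mem_filter.1 hb
        obtain ⟨hgb, hgbt⟩ := mem_filter.1 (hgt b hb)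
        exact ⟨hgb, hbW, by linarith⟩)
  obtain ⟨ν, hν, hνZ⟩ := exists_isMatchingOn_of_injOn hinj fun z hz =>
    ⟨(hZ z hz).1, (hZ z hz).2.1⟩
  refine ⟨_, ν, hν, fun a hsa hqa => ?_, fun a ha => ?_⟩
  · rw [Set.mem_toFinset]
    rcases mem_union.1 (Mkt.cover ▸ mem_univ a : a ∈ Mkt.M ∪ Mkt.W) with haM | haW
    · exact .inl (hfZ (mem_filter.2 ⟨haM, hsa, hqa⟩))
    · exact .inr (hgZ (mem_filter.2 ⟨haW, hsa, hqa⟩))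
  · obtain hz | ⟨z, hz, rfl⟩ := Set.mem_toFinset.1 ha
    · rw [(hνZ a hz).1]
      exact (hZ a hz).2.2
    · rw [(hνZ z hz).2]
      linarith [(hZ z hz).2.2]

theorem exists_sum_le_maxWeight_sub (hu : ∀ a, u a a = 0) (hs : IsStabilizingSubsidy Mkt u p s)
    (hmin : ∀ t, IsStabilizingSubsidy Mkt u p t → ∑ a, s a ≤ ∑ a, t a) :
    ∃ S : Finset A, ∑ a, s a ≤ maxWeight Mkt u S - ∑ a ∈ S, p a := by
  obtain ⟨T, ν, hν, hT, htight⟩ := exists_isMatchingOn_tight_cover hs hmin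
  -- Subsidized agents outside `T` have zero payoff and stay single.
  set S := T ∪ univ.filter fun a => 0 < s a
  have hνS : IsMatchingOn Mkt S ν := hν.mono subset_union_left
  have htightS : ∀ a ∈ S, u a (ν a) + u (ν a) a = (p a + s a) + (p (ν a) + s (ν a)) := by
    intro a ha
    by_cases haT : a ∈ T
    · exact htight a haT
    have hνa : ν a = a := by_contra fun h => haT (hν.2.1 a h)
    have hsa : 0 < s a := by simpa [haT, S] using ha
    have hqa : p a + s a = 0 := le_antisymm (not_lt.1 fun h => haT (hT a hsa h)) (hs.2.1 a)
    rw [hνa, hu, hqa, add_zero]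
  have hsum : ∑ a ∈ S, u a (ν a) = ∑ a ∈ S, (p a + s a) := by
    have := sum_congr rfl htightS
    linarith [hνS.two_mul_sum u, hνS.two_mul_sum fun a _ => p a + s a]
  have hsS : ∑ a ∈ S, s a = ∑ a, s a :=
    sum_subset (subset_univ S) fun a _ ha => le_antisymm
      (not_lt.1 fun h => ha (subset_union_right (mem_filter.2 ⟨mem_univ a, h⟩))) (hs.1 a)
  refine ⟨S, ?_⟩
  have := sum_le_maxWeight (u := u) hνS
  rw [hsum, sum_add_distrib, hsS] at this
  linarith

end Minimal

theorem stable_add_iff {Mkt : TwoSidedMarket A} {u : A → A → ℝ} {μ : A → A} {τ s : A → ℝ} :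
    Stable Mkt u μ (fun a => τ a + s a) ↔
      IsStablePayoff Mkt u (fun a => (u a (μ a) + τ a) + s a) := by
  simp only [Stable, IsStablePayoff, add_assoc]

theorem exists_stabilizing_subsidy_general
    (Mkt : TwoSidedMarket A) (u : A → A → ℝ) (μ : A → A) (τ : A → ℝ)
    (hu : ∀ a, u a a = 0) :
    ∃ s : A → ℝ, (∀ a, 0 ≤ s a) ∧ (∑ a, s a) = instability Mkt u μ τ ∧
      Stable Mkt u μ (fun a => τ a + s a) := by
  obtain ⟨s, hs, hmin⟩ :=
    exists_isStabilizingSubsidy_forall_sum_le Mkt u fun a => u a (μ a) + τ a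
  obtain ⟨S, hS⟩ := exists_sum_le_maxWeight_sub hu hs hmin
  exact ⟨s, hs.1, le_antisymm (hS.trans (sub_le_instability Mkt u μ τ S))
    (instability_le_sum hu hs), stable_add_iff.2 hs.2⟩

/-- there is a nonnegative subsidy vector with total equal to the
Subset Instability that stabilizes the outcome. -/
theorem exists_stabilizing_subsidy
    (Mkt : TwoSidedMarket A) (u : A → A → ℝ) (μ : A → A) (τ : A → ℝ)
    (hu : ∀ a, u a a = 0)
    (hμ : IsMatchingOn Mkt Finset.univ μ)
    (hτ : ZeroSum μ τ) :
    ∃ s : A → ℝ, (∀ a, 0 ≤ s a) ∧ (∑ a, s a) = instability Mkt u μ τ ∧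
      Stable Mkt u μ (fun a => τ a + s a) :=
  exists_stabilizing_subsidy_general Mkt u μ τ hu
end

section
/- If (X, τ) is a stable matching with zero-sum transfers, then setting p_a = τ_a + u_a(μ_X(a)) for all a ∈ A gives a feasible dual solution to (D) whose objective value Σ_{a∈A} p_a equals the primal objective value of the indicator of X, so (X, p) is an optimal primal-dual pair. -/
open Finset

variable {A : Type*} [Fintype A] [DecidableEq A]

theorem ZeroSum.sum_eq_zero {ι : Type*} [Fintype ι] {μ : ι → ι} {τ : ι → ℝ}
    (hτ : ZeroSum μ τ) (hμ : Function.Involutive μ) : ∑ a, τ a = 0 := by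
  refine sum_involution (fun a _ ↦ μ a) (fun a _ ↦ ?_) (fun a _ hτa hμa ↦ hτa (hτ.2 a hμa))
    (fun a _ ↦ mem_univ _) (fun a _ ↦ hμ a)
  by_cases hfixed : μ a = a
  · simp [hfixed, hτ.2 a hfixed]
  · exact hτ.1 a hfixed

theorem stable_gives_optimal_primal_dual_general
    (Mkt : TwoSidedMarket A) (u : A → A → ℝ) (μ : A → A) (τ : A → ℝ)
    (hμ : IsMatchingOn Mkt Finset.univ μ)
    (hτ : ZeroSum μ τ)
    (hstable : Stable Mkt u μ τ) :
    (∀ a, 0 ≤ τ a + u a (μ a)) ∧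
    (∀ m ∈ Mkt.M, ∀ w ∈ Mkt.W,
      u m w + u w m ≤ (τ m + u m (μ m)) + (τ w + u w (μ w))) ∧
    (∑ a, (τ a + u a (μ a))) = ∑ a, u a (μ a) := by
  obtain ⟨hrational, hno_blocking⟩ := hstable
  refine ⟨fun a ↦ by linarith [hrational a],
    fun m hm w hw ↦ by linarith [hno_blocking m hm w hw], ?_⟩
  rw [sum_add_distrib, hτ.sum_eq_zero hμ.1, zero_add]

/-- a stable outcome with zero-sum transfers gives a feasible dual solution
`p_a = τ_a + u_a(μ(a))` whose objective equals the primal objective of the matching. -/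
theorem stable_gives_optimal_primal_dual
    (Mkt : TwoSidedMarket A) (u : A → A → ℝ) (μ : A → A) (τ : A → ℝ)
    (hu : ∀ a, u a a = 0)
    (hμ : IsMatchingOn Mkt Finset.univ μ)
    (hτ : ZeroSum μ τ)
    (hstable : Stable Mkt u μ τ) :
    (∀ a, 0 ≤ τ a + u a (μ a)) ∧
    (∀ m ∈ Mkt.M, ∀ w ∈ Mkt.W,
      u m w + u w m ≤ (τ m + u m (μ m)) + (τ w + u w (μ w))) ∧
    (∑ a, (τ a + u a (μ a))) = ∑ a, u a (μ a) :=
  stable_gives_optimal_primal_dual_general Mkt u μ τ hμ hτ hstable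
end

section
/- NTU Subset Instability is Lipschitz in the utilities: for any matching X and utility functions u, ũ, |I^NTU(u, X) − I^NTU(ũ, X)| ≤ 2 · Σ_{a∈A} ‖u_a − ũ_a‖_∞. -/
open Finset

variable {A : Type*} [Fintype A] [DecidableEq A]

/-- NTU stability of a matching `μ`: individual rationality and no pair where both
agents strictly prefer each other. -/
def NTUStable (Mkt : TwoSidedMarket A) (u : A → A → ℝ) (μ : A → A) : Prop :=
  (∀ a, 0 ≤ u a (μ a)) ∧
  (∀ m ∈ Mkt.M, ∀ w ∈ Mkt.W,
    min (u m w - u m (μ m)) (u w m - u w (μ w)) ≤ 0)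

/-- NTU Subset Instability: minimum total nonnegative subsidy making the matching
individually rational and free of blocking pairs. -/
noncomputable def ntuInstability (Mkt : TwoSidedMarket A) (u : A → A → ℝ) (μ : A → A) : ℝ :=
  sInf {x | ∃ s : A → ℝ, (∀ a, 0 ≤ s a) ∧
    (∀ m ∈ Mkt.M, ∀ w ∈ Mkt.W,
      min (u m w - u m (μ m) - s m) (u w m - u w (μ w) - s w) ≤ 0) ∧
    (∀ a, 0 ≤ u a (μ a) + s a) ∧ x = ∑ a, s a}

/-! Adding `2 ‖u_a − ũ_a‖_∞` to every agent's subsidy turns a feasible subsidy vector for `ũ` into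
one for `u`: each utility difference `u_a(b) − u_a(μ a)` moves by at most `2 ‖u_a − ũ_a‖_∞`, and
each `u_a(μ a)` by at most `‖u_a − ũ_a‖_∞`. So either instability exceeds the other by at most
`2 Σ_a ‖u_a − ũ_a‖_∞`. -/

def IsNTUSubsidy (Mkt : TwoSidedMarket A) (u : A → A → ℝ) (μ : A → A) (s : A → ℝ) : Prop :=
  (∀ a, 0 ≤ s a) ∧
    (∀ m ∈ Mkt.M, ∀ w ∈ Mkt.W,
      min (u m w - u m (μ m) - s m) (u w m - u w (μ w) - s w) ≤ 0) ∧
    (∀ a, 0 ≤ u a (μ a) + s a)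

section

variable (Mkt : TwoSidedMarket A) (u v : A → A → ℝ) (μ : A → A)

theorem ntuInstability_eq_sInf_image :
    ntuInstability Mkt u μ = sInf ((fun s => ∑ a, s a) '' {s | IsNTUSubsidy Mkt u μ s}) := by
  unfold ntuInstability
  congr 1
  ext x
  exact ⟨fun ⟨s, h₁, h₂, h₃, hx⟩ => ⟨s, ⟨h₁, h₂, h₃⟩, hx.symm⟩,
    fun ⟨s, ⟨h₁, h₂, h₃⟩, hx⟩ => ⟨s, h₁, h₂, h₃, hx.symm⟩⟩

theorem isNTUSubsidy_two_mul_sum_abs : IsNTUSubsidy Mkt u μ fun a => 2 * ∑ b, |u a b| := by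
  have hle : ∀ a b, |u a b| ≤ ∑ b', |u a b'| := fun a b =>
    single_le_sum (f := fun b' => |u a b'|) (fun _ _ => abs_nonneg _) (mem_univ b)
  refine ⟨fun a => ?_, fun m _ w _ => min_le_of_left_le ?_, fun a => ?_⟩
  · positivity
  · linarith [hle m w, hle m (μ m), le_abs_self (u m w), neg_abs_le (u m (μ m))]
  · dsimp only
    linarith [hle a (μ a), neg_abs_le (u a (μ a)), hle a a, abs_nonneg (u a a)]

theorem bddBelow_image_sum_setOf_isNTUSubsidy :
    BddBelow ((fun s => ∑ a, s a) '' {s | IsNTUSubsidy Mkt u μ s}) :=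
  ⟨0, by
    rintro _ ⟨s, hs, rfl⟩
    exact sum_nonneg fun a _ => hs.1 a⟩

variable {Mkt u v μ}

theorem IsNTUSubsidy.add_two_mul {s D : A → ℝ} (hs : IsNTUSubsidy Mkt v μ s)
    (hD : ∀ a b, |u a b - v a b| ≤ D a) :
    IsNTUSubsidy Mkt u μ fun a => s a + 2 * D a := by
  obtain ⟨hs_nonneg, hs_block, hs_ir⟩ := hs
  have hD_nonneg : ∀ a, 0 ≤ D a := fun a => (abs_nonneg _).trans (hD a a)
  have hD_le : ∀ a b, u a b ≤ v a b + D a := fun a b => by linarith [(abs_le.mp (hD a b)).2]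
  have hD_ge : ∀ a b, v a b - D a ≤ u a b := fun a b => by linarith [(abs_le.mp (hD a b)).1]
  refine ⟨fun a => by linarith [hs_nonneg a, hD_nonneg a], fun m hm w hw => ?_, fun a => ?_⟩
  · rcases min_le_iff.mp (hs_block m hm w hw) with h | h
    · exact min_le_of_left_le (by linarith [hD_le m w, hD_ge m (μ m)])
    · exact min_le_of_right_le (by linarith [hD_le w m, hD_ge w (μ w)])
  · linarith [hs_ir a, hD_ge a (μ a), hD_nonneg a]

theorem ntuInstability_le_add {D : A → ℝ} (hD : ∀ a b, |u a b - v a b| ≤ D a) :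
    ntuInstability Mkt u μ ≤ ntuInstability Mkt v μ + 2 * ∑ a, D a := by
  rw [ntuInstability_eq_sInf_image, ntuInstability_eq_sInf_image, ← sub_le_iff_le_add]
  refine le_csInf ⟨_, _, isNTUSubsidy_two_mul_sum_abs Mkt v μ, rfl⟩ ?_
  rintro _ ⟨s, hs, rfl⟩
  rw [sub_le_iff_le_add]
  calc sInf ((fun s => ∑ a, s a) '' {s | IsNTUSubsidy Mkt u μ s})
      ≤ ∑ a, (s a + 2 * D a) :=
        csInf_le (bddBelow_image_sum_setOf_isNTUSubsidy Mkt u μ) ⟨_, hs.add_two_mul hD, rfl⟩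
    _ = ∑ a, s a + 2 * ∑ a, D a := by rw [sum_add_distrib, mul_sum]

end

theorem ntuInstability_lipschitz_general [Nonempty A]
    (Mkt : TwoSidedMarket A) (u v : A → A → ℝ) (μ : A → A) :
    |ntuInstability Mkt u μ - ntuInstability Mkt v μ| ≤
      2 * ∑ a, Finset.univ.sup' Finset.univ_nonempty (fun a' => |u a a' - v a a'|) := by
  have hD : ∀ a b, |u a b - v a b| ≤ univ.sup' univ_nonempty fun b' => |u a b' - v a b'| :=
    fun a b => le_sup' (fun b' => |u a b' - v a b'|) (mem_univ b)
  have hD' : ∀ a b, |v a b - u a b| ≤ univ.sup' univ_nonempty fun b' => |u a b' - v a b'| :=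
    fun a b => abs_sub_comm (v a b) (u a b) ▸ hD a b
  rw [abs_sub_le_iff]
  exact ⟨sub_le_iff_le_add'.mpr (ntuInstability_le_add hD),
    sub_le_iff_le_add'.mpr (ntuInstability_le_add hD')⟩

/-- NTU Subset Instability is Lipschitz in the utilities. -/
theorem ntuInstability_lipschitz [Nonempty A]
    (Mkt : TwoSidedMarket A) (u v : A → A → ℝ) (μ : A → A)
    (hu : ∀ a, u a a = 0) (hv : ∀ a, v a a = 0)
    (hμ : IsMatchingOn Mkt Finset.univ μ) :
    |ntuInstability Mkt u μ - ntuInstability Mkt v μ| ≤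
      2 * ∑ a, Finset.univ.sup' Finset.univ_nonempty (fun a' => |u a a' - v a a'|) :=
  ntuInstability_lipschitz_general Mkt u v μ
end
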